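/- If G is a finitely generated infinite simple group and ρ : G → GL(n, ℚ) is a group homomorphism into the group of invertible n × n rational matrices, then ρ is trivial, i.e. ρ(g) is the identity matrix for every g ∈ G. (This is the key intermediate step in the proof of Theorem 1 showing that the constructed groups act trivially on the rational homology of any space with finite Betti numbers.) -/

import Mathlib

/-!
The image of a finitely generated group in `GL(n, ℚ)` involves only finitely many denominators,
so for almost every prime `p` it lies in `GL(n, ℤ_p)` and reduces to a homomorphism into the
finite group `GL(n, 𝔽_p)`. An infinite simple group has no nontrivial finite quotient, so this
reduction is trivial: every entry of `ρ g - 1` has `p`-adic norm `< 1` for almost every `p`.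
A nonzero rational is a `p`-adic unit for almost every `p`, hence `ρ g = 1`.
-/

open Filter Matrix

instance Nat.Primes.fact_prime (p : Nat.Primes) : Fact (p : ℕ).Prime := ⟨p.2⟩

theorem Rat.eventually_norm_padic_le_one (x : ℚ) :
    ∀ᶠ p : Nat.Primes in cofinite, ‖(x : ℚ_[p])‖ ≤ 1 := by
  have hgt : ∀ᶠ m : ℕ in cofinite, x.den < m := by
    rw [Nat.cofinite_eq_atTop]; exact eventually_gt_atTop _
  filter_upwards [Subtype.val_injective.tendsto_cofinite.eventually hgt] with p hp
  exact Padic.norm_rat_le_one fun hdvd => (Nat.le_of_dvd x.den_pos hdvd).not_gt hp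

theorem Rat.eventually_norm_padic_eq_one {x : ℚ} (hx : x ≠ 0) :
    ∀ᶠ p : Nat.Primes in cofinite, ‖(x : ℚ_[p])‖ = 1 := by
  filter_upwards [x.eventually_norm_padic_le_one, x⁻¹.eventually_norm_padic_le_one] with p h h'
  rw [Rat.cast_inv, norm_inv] at h'
  exact le_antisymm h ((inv_le_one₀ (norm_pos_iff.2 (by exact_mod_cast hx))).1 h')

theorem Subgroup.eventually_eq_top_of_fg {G ι : Type*} [Group G] [Group.FG G] {l : Filter ι}
    (K : ι → Subgroup G) (h : ∀ g, ∀ᶠ i in l, g ∈ K i) : ∀ᶠ i in l, K i = ⊤ := by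
  obtain ⟨S, hS⟩ := Group.fg_def.1 ‹_›
  filter_upwards [(eventually_all_finset S).2 fun s _ => h s] with i hi
  rw [eq_top_iff, ← hS, closure_le]
  exact hi

theorem MonoidHom.exists_comp_eq_of_mem_range {G H K : Type*} [Group G] [Group H] [Group K]
    {e : H →* K} (he : Function.Injective e) (f : G →* K) (h : ∀ g, f g ∈ e.range) :
    ∃ σ : G →* H, e.comp σ = f :=
  ⟨(MonoidHom.ofInjective he).symm.toMonoidHom.comp (f.codRestrict e.range h), by
    ext g : 1
    simp [← MonoidHom.ofInjective_apply he]⟩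

theorem MonoidHom.eq_one_of_isSimpleGroup_of_finite {G H : Type*} [Group G] [IsSimpleGroup G]
    [Infinite G] [Group H] [Finite H] (φ : G →* H) : φ = 1 := by
  rcases IsSimpleGroup.eq_bot_or_eq_top_of_normal φ.ker φ.normal_ker with hbot | htop
  · have : Finite G := Finite.of_injective φ (φ.ker_eq_bot_iff.1 hbot)
    exact (not_finite G).elim
  · exact ext fun g => φ.mem_ker.1 (htop ▸ Subgroup.mem_top g)

namespace Matrix.GeneralLinearGroup

variable {n : Type*} [Fintype n] [DecidableEq n]

theorem mem_range_map_of_injective {R S : Type*} [CommRing R] [CommRing S] {f : R →+* S}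
    (hf : Function.Injective f) {u : GL n S} (hu : ∀ i j, u i j ∈ f.range)
    (hu' : ∀ i j, u⁻¹ i j ∈ f.range) : u ∈ (map f).range := by
  have lift : ∀ M : Matrix n n S, (∀ i j, M i j ∈ f.range) → ∃ A : Matrix n n R, A.map f = M :=
    fun M hM => ⟨.of fun i j => (hM i j).choose, by ext i j; exact (hM i j).choose_spec⟩
  obtain ⟨a, ha⟩ := lift u hu
  obtain ⟨b, hb⟩ := lift _ hu'
  have hab : a * b = 1 := map_injective hf (by simp [Matrix.map_mul, ha, hb])
  have hba : b * a = 1 := map_injective hf (by simp [Matrix.map_mul, ha, hb])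
  exact ⟨⟨a, b, hab, hba⟩, Units.ext ha⟩

theorem map_injective {R S : Type*} [CommRing R] [CommRing S] {f : R →+* S}
    (hf : Function.Injective f) : Function.Injective (map (n := n) f) :=
  Units.map_injective (Matrix.map_injective hf)

theorem eventually_map_mem_range_padicInt (A : GL n ℚ) :
    ∀ᶠ p : Nat.Primes in cofinite,
      map (Rat.castHom ℚ_[p]) A ∈ (map (PadicInt.Coe.ringHom (p := p))).range := by
  have hint : ∀ B : GL n ℚ, ∀ᶠ p : Nat.Primes in cofinite, ∀ i j, ‖(B i j : ℚ_[p])‖ ≤ 1 :=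
    fun B => eventually_all.2 fun i => eventually_all.2 fun j =>
      (B i j).eventually_norm_padic_le_one
  filter_upwards [hint A, hint A⁻¹] with p hA hA'
  refine mem_range_map_of_injective (fun _ _ => PadicInt.ext) (fun i j => ⟨⟨_, hA i j⟩, ?_⟩)
    (fun i j => ⟨⟨_, hA' i j⟩, ?_⟩)
  · rw [GeneralLinearGroup.map_apply]; rfl
  · rw [← GeneralLinearGroup.map_inv, GeneralLinearGroup.map_apply]; rfl

theorem norm_padic_sub_one_lt_one_of_map_toZMod_eq_one {p : ℕ} [Fact p.Prime] {A : GL n ℚ}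
    {u : GL n ℤ_[p]} (hu : map PadicInt.Coe.ringHom u = map (Rat.castHom ℚ_[p]) A)
    (hred : map PadicInt.toZMod u = 1) (i j : n) :
    ‖((A i j - (1 : GL n ℚ) i j : ℚ) : ℚ_[p])‖ < 1 := by
  have hcast : ((u i j : ℤ_[p]) : ℚ_[p]) = (A i j : ℚ_[p]) := by
    have h := congr_arg (· i j) hu
    simp only [GeneralLinearGroup.map_apply] at h
    exact h
  calc ‖((A i j - (1 : GL n ℚ) i j : ℚ) : ℚ_[p])‖ = ‖u i j - (1 : Matrix n n ℤ_[p]) i j‖ := by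
        rw [PadicInt.norm_def, PadicInt.coe_sub, hcast, Units.val_one, Rat.cast_sub,
          Matrix.one_apply, Matrix.one_apply]
        split_ifs <;> simp
    _ < 1 := by
      rw [← PadicInt.mem_nonunits, ← IsLocalRing.mem_maximalIdeal, ← PadicInt.ker_toZMod,
        RingHom.mem_ker, map_sub, ← GeneralLinearGroup.map_apply, hred]
      simp [Matrix.one_apply, apply_ite PadicInt.toZMod]

end Matrix.GeneralLinearGroup

theorem MonoidHom.eventually_exists_padicInt_lift {G n : Type*} [Group G] [Group.FG G]
    [Fintype n] [DecidableEq n] (ρ : G →* GL n ℚ) :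
    ∀ᶠ p : Nat.Primes in cofinite, ∃ σ : G →* GL n ℤ_[p],
      (GeneralLinearGroup.map PadicInt.Coe.ringHom).comp σ =
        (GeneralLinearGroup.map (Rat.castHom ℚ_[p])).comp ρ := by
  filter_upwards [Subgroup.eventually_eq_top_of_fg
    (fun p : Nat.Primes => (GeneralLinearGroup.map PadicInt.Coe.ringHom).range.comap
      ((GeneralLinearGroup.map (Rat.castHom ℚ_[p])).comp ρ))
    fun g => GeneralLinearGroup.eventually_map_mem_range_padicInt (ρ g)] with p hp
  exact exists_comp_eq_of_mem_range (GeneralLinearGroup.map_injective fun _ _ => PadicInt.ext) _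
    ((Subgroup.eq_top_iff' _).1 hp)

/-- A homomorphism from a finitely generated infinite simple group into
`GL(n, ℚ)` is trivial. -/
theorem fg_infinite_simple_to_GL_rat_trivial
    (G : Type) [Group G] [Group.FG G] [Infinite G] [IsSimpleGroup G]
    (n : ℕ) (ρ : G →* GL (Fin n) ℚ) :
    ∀ g : G, ρ g = 1 := by
  intro g
  ext i j
  rw [← sub_eq_zero]
  by_contra hx
  obtain ⟨p, ⟨σ, hσ⟩, hnorm⟩ :=
    (ρ.eventually_exists_padicInt_lift.and (Rat.eventually_norm_padic_eq_one hx)).exists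
  have hred := ((GeneralLinearGroup.map PadicInt.toZMod).comp σ).eq_one_of_isSimpleGroup_of_finite
  exact (GeneralLinearGroup.norm_padic_sub_one_lt_one_of_map_toZMod_eq_one
    (DFunLike.congr_fun hσ g) (DFunLike.congr_fun hred g) i j).ne hnorm
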